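/- Consider the Kaczmarz update $x_{k+1} = x_k - \frac{\tilde{a}^T x_k - \tilde{b}_i}{\|\tilde{a}\|_2^2}\tilde{a}$ applied with noisy row $\tilde{a} = a + E_i$ and noisy entry $\tilde{b}_i = b_i + \varepsilon_i$, where $a^T \hat{x} = b_i$ for some $\hat{x}$. Then $\|x_{k+1} - \hat{x}\|_2^2 = \|x_k - \hat{x}\|_2^2 - \frac{(\tilde{a}^T(x_k - \hat{x}))^2}{\|\tilde{a}\|_2^2} + \frac{(E_i^T \hat{x} - \varepsilon_i)^2}{\|\tilde{a}\|_2^2}$. -/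
import Mathlib


open scoped RealInnerProductSpace

theorem stmt3 {n : ℕ} (a Ei xk xhat : EuclideanSpace ℝ (Fin n)) (bi εi : ℝ)
    (atil : EuclideanSpace ℝ (Fin n)) (btil : ℝ)
    (hA : atil = a + Ei) (hB : btil = bi + εi)
    (hne : atil ≠ 0) (hsol : ⟪a, xhat⟫ = bi) :
    ‖(xk - ((⟪atil, xk⟫ - btil) / ‖atil‖ ^ 2) • atil) - xhat‖ ^ 2
      = ‖xk - xhat‖ ^ 2 - (⟪atil, xk - xhat⟫) ^ 2 / ‖atil‖ ^ 2
        + (⟪Ei, xhat⟫ - εi) ^ 2 / ‖atil‖ ^ 2 := by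
  have hn : ‖atil‖ ≠ 0 := norm_ne_zero_iff.mpr hne
  have hn2 : ‖atil‖ ^ 2 ≠ 0 := pow_ne_zero 2 hn
  set t : ℝ := ⟪atil, xk - xhat⟫ with ht
  set e : ℝ := ⟪Ei, xhat⟫ - εi with he
  have hc : ⟪atil, xk⟫ - btil = t + e := by
    simp only [ht, he, inner_sub_right, hB, hA, inner_add_left, ← hsol]
    ring
  have key : xk - ((⟪atil, xk⟫ - btil) / ‖atil‖ ^ 2) • atil - xhat
      = (xk - xhat) - (((t + e) / ‖atil‖ ^ 2) • atil) := by
    rw [hc]; abel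
  rw [key, norm_sub_sq_real, real_inner_smul_right, norm_smul, real_inner_comm atil (xk - xhat), ← ht]
  rw [mul_pow, Real.norm_eq_abs, sq_abs]
  field_simp
  ring
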